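/- Let n ≥ 1 and let F : 𝔽₂ⁿ → 𝔽₂ⁿ be any function. Then the deficiency satisfies 𝒟(F) ≥ (2ⁿ − 1)·2ⁿ⁻¹, with equality if and only if F is APN (i.e., Δ_F ≤ 2). -/

import Mathlib

open Finset

/-- `δ_F(a,b) = |{x : F(x+a) - F(x) = b}|`. -/
def deltaF {G₁ G₂ : Type*} [AddCommGroup G₁] [Fintype G₁] [DecidableEq G₁]
    [AddCommGroup G₂] [DecidableEq G₂] (F : G₁ → G₂) (a : G₁) (b : G₂) : ℕ :=
  (univ.filter fun x => F (x + a) - F x = b).card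

/-- The ambiguity `𝒜(F) = Σ_{a ≠ 0} Σ_b (δ_F(a,b) choose 2)`. -/
def ambiguity {G₁ G₂ : Type*} [AddCommGroup G₁] [Fintype G₁] [DecidableEq G₁]
    [AddCommGroup G₂] [Fintype G₂] [DecidableEq G₂] (F : G₁ → G₂) : ℕ :=
  ∑ a ∈ univ.filter (fun a : G₁ => a ≠ 0), ∑ b : G₂, (deltaF F a b).choose 2

/-- The differential uniformity `Δ_F = max_{a ≠ 0, b} δ_F(a,b)`. -/
def diffUnif {G₁ G₂ : Type*} [AddCommGroup G₁] [Fintype G₁] [DecidableEq G₁]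
    [AddCommGroup G₂] [Fintype G₂] [DecidableEq G₂] (F : G₁ → G₂) : ℕ :=
  (univ.filter (fun a : G₁ => a ≠ 0)).sup fun a => univ.sup fun b : G₂ => deltaF F a b


/-- The deficiency `𝒟(F) = |{(a,b) : a ≠ 0, δ_F(a,b) = 0}|`. -/
def deficiency {G₁ G₂ : Type*} [AddCommGroup G₁] [Fintype G₁] [DecidableEq G₁]
    [AddCommGroup G₂] [Fintype G₂] [DecidableEq G₂] (F : G₁ → G₂) : ℕ :=
  (univ.filter fun p : G₁ × G₂ => p.1 ≠ 0 ∧ deltaF F p.1 p.2 = 0).card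

/-!
For `a ≠ 0` in an elementary abelian 2-group, the solution set of `F (x + a) - F x = b` is stable
under `x ↦ x + a`, which has no fixed points, so every `δ_F(a, b)` is even. Since
`∑_b δ_F(a, b) = 2ⁿ`, at most `2ⁿ⁻¹` of the values `δ_F(a, ·)` are nonzero, with equality exactly
when all of them are `0` or `2`. Summing the resulting bound `2ⁿ⁻¹` on the number of zeros over the
`2ⁿ - 1` nonzero `a` gives the claim.
-/

theorem Finset.even_card_of_forall_add_mem {G : Type*} [AddGroup G] {s : Finset G} {a : G}
    (ha : a ≠ 0) (haa : a + a = 0) (hs : ∀ x ∈ s, x + a ∈ s) : Even #s := by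
  rw [← ZMod.natCast_eq_zero_iff_even, card_eq_sum_ones, Nat.cast_sum, Nat.cast_one]
  refine sum_involution (fun x _ => x + a) (fun _ _ => by decide) (fun x _ _ => ?_)
    (fun x hx => hs x hx) (fun x _ => by rw [add_assoc, haa, add_zero])
  simpa using ha

theorem Finset.card_filter_univ_ne {α : Type*} [Fintype α] [DecidableEq α] (x : α) :
    #{a | a ≠ x} = Fintype.card α - 1 := by
  rw [filter_ne', card_erase_of_mem (mem_univ x), card_univ]

theorem Finset.two_le_of_mem_filter_ne_zero {ι : Type*} {s : Finset ι} {f : ι → ℕ}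
    (hf : ∀ i ∈ s, Even (f i)) {i : ι} (hi : i ∈ s.filter (f · ≠ 0)) : 2 ≤ f i := by
  obtain ⟨hi, hfi⟩ := mem_filter.1 hi
  obtain ⟨k, hk⟩ := hf i hi
  omega

theorem Finset.two_mul_card_filter_ne_zero_le_sum {ι : Type*} {s : Finset ι} {f : ι → ℕ}
    (hf : ∀ i ∈ s, Even (f i)) :
    2 * #{i ∈ s | f i ≠ 0} ≤ ∑ i ∈ s, f i := by
  rw [← sum_filter_ne_zero, mul_comm, ← smul_eq_mul]
  exact card_nsmul_le_sum _ _ _ fun i hi => two_le_of_mem_filter_ne_zero hf hi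

theorem Finset.two_mul_card_filter_ne_zero_eq_sum_iff {ι : Type*} {s : Finset ι} {f : ι → ℕ}
    (hf : ∀ i ∈ s, Even (f i)) :
    2 * #{i ∈ s | f i ≠ 0} = ∑ i ∈ s, f i ↔ ∀ i ∈ s, f i ≤ 2 := by
  rw [← sum_filter_ne_zero, mul_comm, ← smul_eq_mul, ← sum_const,
    sum_eq_sum_iff_of_le fun i hi => two_le_of_mem_filter_ne_zero hf hi]
  refine ⟨fun h i hi => ?_, fun h i hi => ?_⟩
  · by_cases hfi : f i = 0
    · omega
    · exact (h i (mem_filter.2 ⟨hi, hfi⟩)).ge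
  · obtain ⟨hi, hfi⟩ := mem_filter.1 hi
    exact le_antisymm (two_le_of_mem_filter_ne_zero hf (mem_filter.2 ⟨hi, hfi⟩)) (h i hi)

section Differential

variable {G₁ G₂ : Type*} [AddCommGroup G₁] [Fintype G₁] [DecidableEq G₁]
  [AddCommGroup G₂] [DecidableEq G₂] (F : G₁ → G₂)

theorem even_deltaF [Module (ZMod 2) G₂] {a : G₁} (ha : a ≠ 0) (haa : a + a = 0) (b : G₂) :
    Even (deltaF F a b) := by
  refine even_card_of_forall_add_mem ha haa fun x hx => ?_
  rw [mem_filter] at hx ⊢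
  refine ⟨mem_univ _, ?_⟩
  rw [add_assoc, haa, add_zero, ← neg_sub, hx.2, ZModModule.neg_eq_self]

variable [Fintype G₂]

theorem sum_deltaF (a : G₁) : ∑ b, deltaF F a b = Fintype.card G₁ :=
  (card_eq_sum_card_fiberwise fun x _ => mem_univ (F (x + a) - F x)).symm

theorem deficiency_eq_sum :
    deficiency F = ∑ a ∈ univ.filter (· ≠ 0), #{b | deltaF F a b = 0} := by
  rw [deficiency, card_filter, Fintype.sum_prod_type, sum_filter]
  refine sum_congr rfl fun a _ => ?_
  rw [card_filter]
  by_cases ha : a = 0 <;> simp [ha]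

theorem diffUnif_le_iff {k : ℕ} : diffUnif F ≤ k ↔ ∀ a ≠ 0, ∀ b, deltaF F a b ≤ k := by
  simp [diffUnif]

theorem card_le_card_filter_deltaF_eq_zero_add [Module (ZMod 2) G₂] {m : ℕ}
    (hcard : Fintype.card G₁ = 2 * m) {a : G₁} (ha : a ≠ 0) (haa : a + a = 0) :
    Fintype.card G₂ ≤ #{b | deltaF F a b = 0} + m := by
  have h := two_mul_card_filter_ne_zero_le_sum fun b (_ : b ∈ univ) => even_deltaF F ha haa b
  rw [sum_deltaF, hcard] at h
  have hsplit : #{b | deltaF F a b = 0} + #{b | deltaF F a b ≠ 0} = Fintype.card G₂ :=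
    card_filter_add_card_filter_not _
  omega

theorem card_filter_deltaF_eq_zero_add_eq_card_iff [Module (ZMod 2) G₂] {m : ℕ}
    (hcard : Fintype.card G₁ = 2 * m) {a : G₁} (ha : a ≠ 0) (haa : a + a = 0) :
    #{b | deltaF F a b = 0} + m = Fintype.card G₂ ↔ ∀ b, deltaF F a b ≤ 2 := by
  have h := two_mul_card_filter_ne_zero_eq_sum_iff fun b (_ : b ∈ univ) =>
    even_deltaF F ha haa b
  rw [sum_deltaF, hcard] at h
  have hsplit : #{b | deltaF F a b = 0} + #{b | deltaF F a b ≠ 0} = Fintype.card G₂ :=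
    card_filter_add_card_filter_not _
  simp only [mem_univ, forall_const] at h
  rw [← h]
  omega

end Differential

section ElementaryAbelian

variable {G : Type*} [AddCommGroup G] [Fintype G] [DecidableEq G] (F : G → G)
  [Module (ZMod 2) G] {m : ℕ} (hcard : Fintype.card G = 2 * m)

include hcard in
theorem le_card_filter_deltaF_eq_zero {a : G} (ha : a ≠ 0) : m ≤ #{b | deltaF F a b = 0} := by
  have := card_le_card_filter_deltaF_eq_zero_add F hcard ha (ZModModule.add_self a)
  omega

include hcard in
theorem le_deficiency : (Fintype.card G - 1) * m ≤ deficiency F := by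
  rw [deficiency_eq_sum, ← card_filter_univ_ne, ← smul_eq_mul]
  exact card_nsmul_le_sum _ _ _ fun a ha =>
    le_card_filter_deltaF_eq_zero F hcard (mem_filter.1 ha).2

include hcard in
theorem deficiency_eq_iff_diffUnif_le_two :
    deficiency F = (Fintype.card G - 1) * m ↔ diffUnif F ≤ 2 := by
  rw [deficiency_eq_sum, ← card_filter_univ_ne, ← smul_eq_mul, ← sum_const, eq_comm,
    sum_eq_sum_iff_of_le fun a ha => le_card_filter_deltaF_eq_zero F hcard (mem_filter.1 ha).2,
    diffUnif_le_iff]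
  simp only [mem_filter, mem_univ, true_and]
  refine forall₂_congr fun a ha => ?_
  rw [← card_filter_deltaF_eq_zero_add_eq_card_iff F hcard ha (ZModModule.add_self a), hcard]
  omega

end ElementaryAbelian

theorem deficiency_ge_APN_bound {n : ℕ} (hn : 1 ≤ n)
    (F : (Fin n → ZMod 2) → (Fin n → ZMod 2)) :
    (2 ^ n - 1) * 2 ^ (n - 1) ≤ deficiency F ∧
      (deficiency F = (2 ^ n - 1) * 2 ^ (n - 1) ↔ diffUnif F ≤ 2) := by
  have hcard : Fintype.card (Fin n → ZMod 2) = 2 * 2 ^ (n - 1) := by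
    rw [Fintype.card_fun, ZMod.card, Fintype.card_fin, ← pow_succ', Nat.sub_add_cancel hn]
  have hcard_pow : Fintype.card (Fin n → ZMod 2) = 2 ^ n := by simp
  rw [← hcard_pow]
  exact ⟨le_deficiency F hcard, deficiency_eq_iff_diffUnif_le_two F hcard⟩
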